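/- Let s ∈ (0,1), l ∈ (−2,4), and h ∈ ℝ, and set a = max(0,l), b = min(4, 2+l). Suppose there exists p* with a < p* < b and P(p*) > 0. Then there exist real numbers ζ₁, ζ₂, ζ₃, ζ₄ with P(ζ₁) = P(ζ₂) = P(ζ₃) = P(ζ₄) = 0 satisfying ζ₁ ≤ min(0,l), a ≤ ζ₂ < p* < ζ₃ ≤ b, and ζ₄ ≥ max(4, 2+l). (In particular the quartic P has four real roots, only the middle two of which lie in the physical range of the variable p.) -/
import Mathlib


/-- `A_s^l(p) = l + 1 − p − 2s − l·s + (3/2)·s·p`. -/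
noncomputable def redA (s l p : ℝ) : ℝ := l + 1 - p - 2 * s - l * s + 3 / 2 * s * p

/-- `B_s^l(p) = s²(1−s)²·p·(p−l)·(p−4)·(p−2−l)`. -/
noncomputable def redB (s l p : ℝ) : ℝ :=
  s ^ 2 * (1 - s) ^ 2 * p * (p - l) * (p - 4) * (p - 2 - l)

/-- `P_{l,h}^s(p) = B_s^l(p) − (h + (1−2s) − A_s^l(p))²`. -/
noncomputable def redP (s l h p : ℝ) : ℝ := redB s l p - (h + (1 - 2 * s) - redA s l p) ^ 2

open Polynomial Filter in
lemma quartic_tendsto_atTop (c c3 c2 c1 c0 : ℝ) (hc : 0 < c) :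
    Tendsto (fun p : ℝ => c * p ^ 4 + c3 * p ^ 3 + c2 * p ^ 2 + c1 * p + c0) atTop atTop := by
  set Q : ℝ[X] := C c * X ^ 4 + C c3 * X ^ 3 + C c2 * X ^ 2 + C c1 * X + C c0 with hQ
  have hdeg : Q.natDegree = 4 := by
    rw [hQ]; compute_degree!
    exact hc.ne'
  have hlc : Q.leadingCoeff = c := by
    rw [Polynomial.leadingCoeff, hdeg, hQ]
    simp [coeff_X, coeff_C]
  have hdeg' : 0 < Q.degree := by
    rw [degree_eq_natDegree (by intro h; rw [h] at hdeg; simp at hdeg), hdeg]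
    norm_num
  have := Q.tendsto_atTop_of_leadingCoeff_nonneg hdeg' (by rw [hlc]; exact hc.le)
  convert this using 2 with p
  simp [hQ]

lemma continuous_redP (s l h : ℝ) : Continuous (fun p => redP s l h p) := by
  unfold redP redB redA; fun_prop

/-- If `P` is positive at some point of `(max(0,l), min(4,2+l))`, then the quartic `P` has four
real roots `ζ₁ ≤ min(0,l)`, `max(0,l) ≤ ζ₂ < p* < ζ₃ ≤ min(4,2+l)`, `ζ₄ ≥ max(4,2+l)`;
only the middle two lie in the physical range of `p`. -/
theorem redP_four_roots (s l h : ℝ) (hs : s ∈ Set.Ioo (0 : ℝ) 1) (hl : l ∈ Set.Ioo (-2 : ℝ) 4)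
    (pstar : ℝ) (h₁ : max 0 l < pstar) (h₂ : pstar < min 4 (2 + l))
    (h₃ : 0 < redP s l h pstar) :
    ∃ ζ₁ ζ₂ ζ₃ ζ₄ : ℝ,
      redP s l h ζ₁ = 0 ∧ redP s l h ζ₂ = 0 ∧ redP s l h ζ₃ = 0 ∧ redP s l h ζ₄ = 0 ∧
      ζ₁ ≤ min 0 l ∧ max 0 l ≤ ζ₂ ∧ ζ₂ < pstar ∧ pstar < ζ₃ ∧ ζ₃ ≤ min 4 (2 + l) ∧
      max 4 (2 + l) ≤ ζ₄ := by
  obtain ⟨hs0, hs1⟩ := hs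
  set f : ℝ → ℝ := fun p => redP s l h p with hf
  have hcont : Continuous f := continuous_redP s l h
  set c : ℝ := s ^ 2 * (1 - s) ^ 2 with hc
  have h1s : 0 < 1 - s := by linarith
  have hcpos : 0 < c := mul_pos (pow_pos hs0 2) (pow_pos h1s 2)
  set u : ℝ := h - l + l * s with hu
  set v : ℝ := 1 - 3 / 2 * s with hv
  have hexp : ∀ p, f p = c * p ^ 4 + (-c * (6 + 2 * l)) * p ^ 3 +
      (c * (8 + 10 * l + l ^ 2) - v ^ 2) * p ^ 2 +
      (-c * (8 * l + 4 * l ^ 2) - 2 * u * v) * p + (-u ^ 2) := by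
    intro p
    simp only [hf, redP, redB, redA, hc, hu, hv]
    ring
  -- f → +∞ at both ends
  have htop : Filter.Tendsto f Filter.atTop Filter.atTop := by
    have := quartic_tendsto_atTop c (-c * (6 + 2 * l)) (c * (8 + 10 * l + l ^ 2) - v ^ 2)
      (-c * (8 * l + 4 * l ^ 2) - 2 * u * v) (-u ^ 2) hcpos
    exact this.congr fun p => (hexp p).symm
  have hbot : Filter.Tendsto f Filter.atBot Filter.atTop := by
    have := (quartic_tendsto_atTop c (c * (6 + 2 * l)) (c * (8 + 10 * l + l ^ 2) - v ^ 2)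
      (c * (8 * l + 4 * l ^ 2) + 2 * u * v) (-u ^ 2) hcpos).comp Filter.tendsto_neg_atBot_atTop
    refine this.congr fun p => ?_
    simp only [Function.comp]
    rw [hexp p]; ring
  -- boundary values are ≤ 0
  have hB0 : ∀ p, redB s l p = 0 → f p ≤ 0 := by
    intro p hp
    simp only [hf, redP, hp]
    nlinarith [sq_nonneg (h + (1 - 2 * s) - redA s l p)]
  have hfa : f (max 0 l) ≤ 0 := by
    refine hB0 _ ?_
    rcases le_total l 0 with hl0 | hl0
    · rw [max_eq_left hl0]; simp [redB]
    · rw [max_eq_right hl0]; simp [redB]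
  have hfm : f (min 0 l) ≤ 0 := by
    refine hB0 _ ?_
    rcases le_total l 0 with hl0 | hl0
    · rw [min_eq_right hl0]; simp [redB]
    · rw [min_eq_left hl0]; simp [redB]
  have hfb : f (min 4 (2 + l)) ≤ 0 := by
    refine hB0 _ ?_
    rcases le_total 4 (2 + l) with hl0 | hl0
    · rw [min_eq_left hl0]; simp [redB]
    · rw [min_eq_right hl0]
      have : 2 + l - 2 - l = 0 := by ring
      simp [redB, this]
  have hfM : f (max 4 (2 + l)) ≤ 0 := by
    refine hB0 _ ?_
    rcases le_total 4 (2 + l) with hl0 | hl0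
    · rw [max_eq_right hl0]
      have : 2 + l - 2 - l = 0 := by ring
      simp [redB, this]
    · rw [max_eq_left hl0]; simp [redB]
  -- get far points where f > 0
  obtain ⟨x₁, hx₁⟩ := ((htop.eventually_gt_atTop 0).and
    (Filter.eventually_gt_atTop (max 4 (2 + l)))).exists
  obtain ⟨x₀, hx₀⟩ := ((hbot.eventually_gt_atTop 0).and
    (Filter.eventually_lt_atBot (min 0 l))).exists
  -- ζ₁ via IVT on [x₀, min 0 l]
  obtain ⟨ζ₁, hζ₁mem, hζ₁⟩ := intermediate_value_Icc' hx₀.2.le hcont.continuousOn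
    (Set.mem_Icc.2 ⟨hfm, hx₀.1.le⟩)
  -- ζ₂ via IVT on [max 0 l, pstar]
  obtain ⟨ζ₂, hζ₂mem, hζ₂⟩ := intermediate_value_Icc h₁.le hcont.continuousOn
    (Set.mem_Icc.2 ⟨hfa, h₃.le⟩)
  -- ζ₃ via IVT on [pstar, min 4 (2+l)]
  obtain ⟨ζ₃, hζ₃mem, hζ₃⟩ := intermediate_value_Icc' h₂.le hcont.continuousOn
    (Set.mem_Icc.2 ⟨hfb, h₃.le⟩)
  -- ζ₄ via IVT on [max 4 (2+l), x₁]
  obtain ⟨ζ₄, hζ₄mem, hζ₄⟩ := intermediate_value_Icc hx₁.2.le hcont.continuousOn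
    (Set.mem_Icc.2 ⟨hfM, hx₁.1.le⟩)
  refine ⟨ζ₁, ζ₂, ζ₃, ζ₄, hζ₁, hζ₂, hζ₃, hζ₄, hζ₁mem.2, hζ₂mem.1, ?_, ?_, hζ₃mem.2, hζ₄mem.1⟩
  · rcases lt_or_eq_of_le hζ₂mem.2 with h' | h'
    · exact h'
    · exact absurd (h' ▸ hζ₂) h₃.ne'
  · rcases lt_or_eq_of_le hζ₃mem.1 with h' | h'
    · exact h'
    · exact absurd (h' ▸ hζ₃) h₃.ne'
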